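/- arXiv:0806.1494 — 2 statements merged into one kernel-verified Lean document; each statement's English description precedes it below -/
import Mathlib

section
/- Let d = 2^p. A permutation σ is obtainable from the identity in at most p steps in the whole genome duplication - random loss model if and only if σ avoids every minimal permutation with d descents, i.e., no permutation π with desc(π) = d all of whose proper patterns have fewer than d descents is a pattern of σ. Moreover, the set B_d of minimal permutations with d descents is finite. -/
/-- `σ` has a descent at (0-based) position `i`, i.e. `σ i > σ (i+1)`. -/
def IsDescentAt {n : ℕ} (σ : Equiv.Perm (Fin n)) (i : ℕ) : Prop :=
  ∃ h : i + 1 < n, σ ⟨i + 1, h⟩ < σ ⟨i, Nat.lt_of_succ_lt h⟩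

/-- The number of descents of `σ`. -/
noncomputable def descNum {n : ℕ} (σ : Equiv.Perm (Fin n)) : ℕ :=
  {i : ℕ | IsDescentAt σ i}.ncard

/-- `π` is a pattern of `σ` (written `π ≺ σ`). -/
def IsPattern {k n : ℕ} (π : Equiv.Perm (Fin k)) (σ : Equiv.Perm (Fin n)) : Prop :=
  ∃ f : Fin k ↪o Fin n, ∀ ℓ m : Fin k, π ℓ < π m → σ (f ℓ) < σ (f m)

/-- `σ` is a minimal permutation with `d` descents: it has `d` descents and every
pattern `π ≺ σ` with `π ≠ σ` (equivalently, of strictly smaller size) has fewer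
than `d` descents. -/
def MinimalWithDescents (d : ℕ) {n : ℕ} (σ : Equiv.Perm (Fin n)) : Prop :=
  descNum σ = d ∧
    ∀ (k : ℕ) (π : Equiv.Perm (Fin k)), k < n → IsPattern π σ → descNum π < d

/-- One step of the whole genome duplication - random loss model. -/
def DLStep {n : ℕ} (σ σ' : Equiv.Perm (Fin n)) : Prop :=
  ∃ (m : ℕ) (τ : Equiv.Perm (Fin n)),
    (∀ i j : Fin n, (i : ℕ) < m → (j : ℕ) < m → i < j → τ i < τ j) ∧
    (∀ i j : Fin n, m ≤ (i : ℕ) → m ≤ (j : ℕ) → i < j → τ i < τ j) ∧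
    ∀ i, σ' i = σ (τ i)

/-- `σ` is obtainable from the identity permutation in at most `p` duplication-loss steps. -/
def ObtainableIn {n : ℕ} (p : ℕ) (σ : Equiv.Perm (Fin n)) : Prop :=
  ∃ (q : ℕ) (c : ℕ → Equiv.Perm (Fin n)), q ≤ p ∧ c 0 = 1 ∧ c q = σ ∧
    ∀ i, i < q → DLStep (c i) (c (i + 1))

/-!
Everything is governed by the number of descents. A duplication-loss step at most doubles the
number of ascending runs, so `p` steps leave fewer than `2 ^ p` descents. Conversely, a
permutation with at most `2B + 1` descents arises in one step from a permutation with at most `B`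
descents: interleave its first `B + 1` runs with the remaining ones, run by run. The number of
descents can only drop when passing to a pattern, and prefixes realise every smaller value, so
containing a minimal permutation with `d` descents amounts to having at least `d` descents.
Finally, every entry of a minimal permutation is an end of a descent (otherwise deleting it keeps
all descents), so minimal permutations with `d` descents have size at most `2d`.
-/

instance {n : ℕ} (σ : Equiv.Perm (Fin n)) : DecidablePred (IsDescentAt σ) :=
  fun i => inferInstanceAs (Decidable (∃ _ : i + 1 < n, _))

section Descents

variable {n : ℕ} (σ : Equiv.Perm (Fin n))

theorem descNum_eq_count {N : ℕ} (hN : n ≤ N + 1) :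
    descNum σ = Nat.count (IsDescentAt σ) N := by
  rw [descNum, Nat.count_eq_card_filter_range, ← Set.ncard_coe_finset]
  congr 1
  ext i
  simp only [Set.mem_ofPred_eq, Finset.coe_filter, Finset.mem_range]
  exact ⟨fun h => ⟨by obtain ⟨hi, -⟩ := h; omega, h⟩, And.right⟩

theorem count_isDescentAt_le_descNum (j : ℕ) : Nat.count (IsDescentAt σ) j ≤ descNum σ := by
  rw [descNum_eq_count σ (le_max_right j n |>.trans (Nat.le_succ _))]
  exact Nat.count_monotone _ (le_max_left j n)

/-- `Nat.count (IsDescentAt σ) j` is the index of the ascending run of `σ` containing position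
`j`. -/
theorem apply_lt_apply_of_count_eq {a b : Fin n} (hab : a < b)
    (h : Nat.count (IsDescentAt σ) a = Nat.count (IsDescentAt σ) b) : σ a < σ b := by
  have no_descent : ∀ c, (a : ℕ) ≤ c → c < b → ¬ IsDescentAt σ c := fun c hac hcb hc =>
    ((Nat.count_monotone _ hac).trans_lt (Nat.count_strict_mono hc hcb)).ne h
  have le_shift : ∀ k (hk : a + k < n), a + k ≤ b → σ a ≤ σ ⟨a + k, hk⟩ := by
    intro k
    induction k with
    | zero => exact fun _ _ => le_rfl
    | succ k ih =>
      intro hk hkb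
      refine (ih (by omega) (by omega)).trans (not_lt.1 fun hlt => ?_)
      exact no_descent (a + k) (by omega) (by omega) ⟨hk, hlt⟩
  have hb : (⟨a + (b - a), by omega⟩ : Fin n) = b := Fin.ext (by simp; omega)
  exact (hb ▸ le_shift (b - a) (by omega) (by omega)).lt_of_ne (σ.injective.ne hab.ne)

theorem count_lt_count_of_apply_lt {a b : Fin n} (hab : a < b) (h : σ b < σ a) :
    Nat.count (IsDescentAt σ) a < Nat.count (IsDescentAt σ) b :=
  (Nat.count_monotone _ hab.le).lt_of_ne fun he => (apply_lt_apply_of_count_eq σ hab he).asymm h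

theorem descNum_le_of_tag {B : ℕ} (u : Fin n → ℕ) (hu : Monotone u) (huB : ∀ a, u a ≤ B)
    (hdesc : ∀ a b : Fin n, (b : ℕ) = a + 1 → σ b < σ a → u a < u b) :
    descNum σ ≤ B := by
  let g : ℕ → ℕ := fun i => if h : i + 1 < n then u ⟨i + 1, h⟩ else 0
  have hg : ∀ i (hi : IsDescentAt σ i), u ⟨i, by obtain ⟨h, -⟩ := hi; omega⟩ < g i := by
    rintro i ⟨h, hlt⟩
    simpa [g, h] using hdesc _ _ rfl hlt
  have hg_mono : StrictMonoOn g {i | IsDescentAt σ i} := by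
    intro i hi j hj hij
    refine lt_of_le_of_lt ?_ (hg j hj)
    obtain ⟨h, -⟩ := hi
    simpa [g, h] using hu (Fin.mk_le_mk.2 hij)
  calc descNum σ ≤ (Set.Icc 1 B).ncard :=
        Set.ncard_le_ncard_of_injOn g (fun i hi => ⟨(hg i hi).trans_le' (Nat.zero_le _), by
          obtain ⟨h, -⟩ := hi; simpa [g, h] using huB _⟩) hg_mono.injOn (Set.finite_Icc 1 B)
    _ = B := by simp

theorem eq_one_of_descNum_eq_zero (h : descNum σ = 0) : σ = 1 := by
  have hσ : StrictMono σ := fun a b hab => apply_lt_apply_of_count_eq σ hab <| by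
    have := count_isDescentAt_le_descNum σ a
    have := count_isDescentAt_le_descNum σ b
    omega
  have := (hσ.range_inj strictMono_id).1 (by simp)
  exact Equiv.ext (congrFun this)

theorem descNum_one : descNum (1 : Equiv.Perm (Fin n)) = 0 :=
  Nat.le_zero.1 <| descNum_le_of_tag 1 (fun _ => 0) monotone_const (fun _ => le_rfl)
    fun a b hb h => absurd h (not_lt.2 (Fin.le_def.2 (by simp; omega)))

end Descents

section Patterns

theorem IsPattern.refl {n : ℕ} (σ : Equiv.Perm (Fin n)) : IsPattern σ σ :=
  ⟨RelEmbedding.refl _, fun _ _ h => h⟩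

theorem IsPattern.trans {k j n : ℕ} {π : Equiv.Perm (Fin k)} {ρ : Equiv.Perm (Fin j)}
    {σ : Equiv.Perm (Fin n)} (h₁ : IsPattern π ρ) (h₂ : IsPattern ρ σ) :
    IsPattern π σ := by
  obtain ⟨f, hf⟩ := h₁
  obtain ⟨g, hg⟩ := h₂
  exact ⟨f.trans g, fun ℓ m h => hg _ _ (hf ℓ m h)⟩

theorem exists_perm_lt_iff {k : ℕ} {α : Type*} [LinearOrder α] (v : Fin k → α)
    (hv : Function.Injective v) :
    ∃ π : Equiv.Perm (Fin k), ∀ ℓ m, π ℓ < π m ↔ v ℓ < v m := by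
  have hsort : StrictMono (v ∘ Tuple.sort v) :=
    (Tuple.monotone_sort v).strictMono_of_injective (hv.comp (Tuple.sort v).injective)
  refine ⟨(Tuple.sort v)⁻¹, fun ℓ m => ?_⟩
  simpa [Equiv.Perm.inv_def] using (hsort.lt_iff_lt (a := (Tuple.sort v)⁻¹ ℓ)
    (b := (Tuple.sort v)⁻¹ m)).symm

theorem exists_isPattern_of_orderEmbedding {k n : ℕ} (σ : Equiv.Perm (Fin n))
    (f : Fin k ↪o Fin n) : ∃ π : Equiv.Perm (Fin k), IsPattern π σ ∧
      ∀ ℓ m, π ℓ < π m ↔ σ (f ℓ) < σ (f m) := by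
  obtain ⟨π, hπ⟩ := exists_perm_lt_iff (fun ℓ => σ (f ℓ)) (σ.injective.comp f.injective)
  exact ⟨π, ⟨f, fun ℓ m => (hπ ℓ m).1⟩, hπ⟩

theorem descNum_le_of_isPattern {k n : ℕ} {π : Equiv.Perm (Fin k)} {σ : Equiv.Perm (Fin n)}
    (h : IsPattern π σ) : descNum π ≤ descNum σ := by
  obtain ⟨f, hf⟩ := h
  refine descNum_le_of_tag π (fun ℓ => Nat.count (IsDescentAt σ) (f ℓ))
    (fun a b hab => Nat.count_monotone _ (f.monotone hab))
    (fun _ => count_isDescentAt_le_descNum σ _) fun a b hab hlt => ?_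
  exact count_lt_count_of_apply_lt σ (f.strictMono (Fin.lt_def.2 (by omega))) (hf _ _ hlt)

/-- The prefix of length `c + 1` keeps exactly the descents of `σ` before position `c`. -/
theorem exists_isPattern_descNum_eq {n : ℕ} (σ : Equiv.Perm (Fin n)) {j : ℕ}
    (hj : j ≤ descNum σ) :
    ∃ (k : ℕ) (π : Equiv.Perm (Fin k)), IsPattern π σ ∧ descNum π = j := by
  rcases hj.eq_or_lt with rfl | hj
  · exact ⟨n, σ, IsPattern.refl σ, rfl⟩
  rw [descNum_eq_count σ (Nat.le_succ n)] at hj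
  set c := Nat.nth (IsDescentAt σ) j
  have hc : c < n := Nat.nth_lt_of_lt_count hj
  obtain ⟨π, hπ, hlt⟩ :=
    exists_isPattern_of_orderEmbedding σ (Fin.castLEOrderEmb (n := c + 1) hc)
  have hdesc : ∀ i < c, IsDescentAt π i ↔ IsDescentAt σ i := fun i hi =>
    ⟨fun ⟨_, h⟩ => ⟨by omega, (hlt _ _).1 h⟩,
      fun ⟨_, h⟩ => ⟨by omega, (hlt ⟨i + 1, by omega⟩ ⟨i, by omega⟩).2 h⟩⟩
  refine ⟨c + 1, π, hπ, ?_⟩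
  rw [descNum_eq_count π le_rfl,
    le_antisymm (Nat.count_mono_left fun i hi => (hdesc i hi).1)
      (Nat.count_mono_left fun i hi => (hdesc i hi).2)]
  exact Nat.count_nth fun hf => hj.trans_le (Nat.count_le_card hf n)

theorem exists_minimalWithDescents_isPattern {n d : ℕ} (σ : Equiv.Perm (Fin n))
    (hd : d ≤ descNum σ) :
    ∃ (k : ℕ) (π : Equiv.Perm (Fin k)), MinimalWithDescents d π ∧ IsPattern π σ := by
  classical
  have hex : ∃ k, ∃ π : Equiv.Perm (Fin k), IsPattern π σ ∧ descNum π = d :=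
    exists_isPattern_descNum_eq σ hd
  obtain ⟨π, hπσ, hπ⟩ := Nat.find_spec hex
  refine ⟨_, π, ⟨hπ, fun k ρ hk hρπ => ?_⟩, hπσ⟩
  refine (hπ ▸ descNum_le_of_isPattern hρπ).lt_of_ne fun hρ => ?_
  exact Nat.find_min hex hk ⟨ρ, hρπ.trans hπσ, hρ⟩

theorem exists_minimalWithDescents_isPattern_iff {n d : ℕ} (σ : Equiv.Perm (Fin n)) :
    (∃ (k : ℕ) (π : Equiv.Perm (Fin k)), MinimalWithDescents d π ∧ IsPattern π σ) ↔
      d ≤ descNum σ :=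
  ⟨fun ⟨_, _, hmin, hπ⟩ => hmin.1 ▸ descNum_le_of_isPattern hπ,
    exists_minimalWithDescents_isPattern σ⟩

end Patterns

section Minimal

theorem exists_isPattern_descNum_le_of_erase {N : ℕ} (π : Equiv.Perm (Fin (N + 1)))
    (j : Fin (N + 1)) (hj : ¬ IsDescentAt π j) (hj' : ∀ i, IsDescentAt π i → i + 1 ≠ j) :
    ∃ π' : Equiv.Perm (Fin N), IsPattern π' π ∧ descNum π ≤ descNum π' := by
  obtain ⟨π', hπ', hπ'lt⟩ := exists_isPattern_of_orderEmbedding π (Fin.succAboveOrderEmb j)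
  have hval : ∀ x : Fin N,
      (j.succAboveOrderEmb x : ℕ) = if (x : ℕ) < j then (x : ℕ) else x + 1 := by
    intro x
    split_ifs with h
    · rw [Fin.succAboveOrderEmb_apply, Fin.succAbove_of_castSucc_lt _ _ h]; rfl
    · rw [Fin.succAboveOrderEmb_apply, Fin.succAbove_of_le_castSucc _ _ (not_lt.1 h)]; rfl
  -- the position in `π'` of the entry at position `a` of `π`
  let idx : ℕ → ℕ := fun a => if (j : ℕ) < a then a - 1 else a
  refine ⟨π', hπ', descNum_le_of_tag π (fun a => Nat.count (IsDescentAt π') (idx a))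
    (fun a b hab => Nat.count_monotone _ ?_) (fun _ => count_isDescentAt_le_descNum π' _) ?_⟩
  · have : (a : ℕ) ≤ b := hab
    simp only [idx]
    split_ifs <;> omega
  intro a b hb hlt
  have ha : IsDescentAt π a :=
    ⟨by omega, by rwa [show (⟨a + 1, by omega⟩ : Fin (N + 1)) = b from Fin.ext hb.symm]⟩
  have haj : (a : ℕ) ≠ j := fun h => hj (h ▸ ha)
  have haj' : (a : ℕ) + 1 ≠ j := hj' a ha
  have hx : idx a + 1 < N := by simp only [idx]; split_ifs <;> omega
  have hxa : j.succAboveOrderEmb ⟨idx a, by omega⟩ = a :=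
    Fin.ext (by rw [hval]; simp only [idx]; split_ifs <;> omega)
  have hxb : j.succAboveOrderEmb ⟨idx a + 1, hx⟩ = b :=
    Fin.ext (by rw [hval, hb]; simp only [idx]; split_ifs <;> omega)
  have hidx : idx b = idx a + 1 := by simp only [idx, hb]; split_ifs <;> omega
  show Nat.count _ (idx a) < Nat.count _ (idx b)
  rw [hidx]
  exact Nat.count_lt_count_succ_iff.2 ⟨hx, (hπ'lt _ _).2 (by rwa [hxa, hxb])⟩

theorem le_two_mul_of_minimalWithDescents {d n : ℕ} {π : Equiv.Perm (Fin n)}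
    (h : MinimalWithDescents d π) : n ≤ 2 * d := by
  by_contra! hn
  obtain ⟨N, rfl⟩ : ∃ N, n = N + 1 := ⟨n - 1, by omega⟩
  let D := (Finset.range (N + 1)).filter (IsDescentAt π)
  have hD : D.card = d := by
    rw [← h.1, descNum_eq_count π (Nat.le_succ _), Nat.count_eq_card_filter_range]
  have hcard : (D ∪ D.image (· + 1)).card < (Finset.range (N + 1)).card := by
    have := Finset.card_union_le D (D.image (· + 1))
    have := Finset.card_image_le (s := D) (f := (· + 1))
    simp only [Finset.card_range]
    omega
  obtain ⟨j, hjn, hjD⟩ := Finset.exists_mem_notMem_of_card_lt_card hcard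
  rw [Finset.mem_range] at hjn
  have hj : ¬ IsDescentAt π j := fun hj => hjD (Finset.mem_union_left _ (by simp [D, hj, hjn]))
  have hj' : ∀ i, IsDescentAt π i → i + 1 ≠ j := fun i hi hij => hjD <|
    Finset.mem_union_right _ (Finset.mem_image.2 ⟨i, by simp [D, hi]; omega, hij⟩)
  obtain ⟨π', hπ', hle⟩ := exists_isPattern_descNum_le_of_erase π ⟨j, hjn⟩ hj hj'
  exact (h.2 N π' (Nat.lt_succ_self N) hπ').not_ge (h.1 ▸ hle)

theorem finite_setOf_minimalWithDescents (d : ℕ) :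
    {x : Σ n : ℕ, Equiv.Perm (Fin n) | MinimalWithDescents d x.2}.Finite := by
  refine ((Set.finite_Iic (2 * d)).biUnion fun n _ => Set.finite_range (Sigma.mk n)).subset ?_
  rintro ⟨n, π⟩ hπ
  exact Set.mem_biUnion (le_two_mul_of_minimalWithDescents hπ) ⟨π, rfl⟩

end Minimal

section Step

variable {n : ℕ}

theorem descNum_le_of_dlStep {σ σ' : Equiv.Perm (Fin n)} (h : DLStep σ σ') :
    descNum σ' ≤ 2 * descNum σ + 1 := by
  obtain ⟨m, τ, hτ₁, hτ₂, hσ'⟩ := h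
  have hτ : ∀ a b : Fin n, a < b → ((b : ℕ) < m ∨ m ≤ (a : ℕ)) → τ a < τ b := by
    rintro a b hab (hb | ha)
    · exact hτ₁ a b (by omega) hb hab
    · exact hτ₂ a b ha (by omega) hab
  -- each block is tagged by the run index in `σ`, the second one shifted past the first
  let u : Fin n → ℕ := fun a =>
    (if (a : ℕ) < m then 0 else descNum σ + 1) + Nat.count (IsDescentAt σ) (τ a)
  have hu : ∀ a b : Fin n, a < b → u a ≤ u b ∧ (σ' b < σ' a → u a < u b) := by
    intro a b hab
    have ha := count_isDescentAt_le_descNum σ (τ a)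
    have hb := count_isDescentAt_le_descNum σ (τ b)
    by_cases hblock : (b : ℕ) < m ∨ m ≤ (a : ℕ)
    · have hlt := hτ a b hab hblock
      have hc := Nat.count_monotone (IsDescentAt σ) (Fin.le_def.1 hlt.le)
      refine ⟨?_, fun h => ?_⟩
      · simp only [u]; split_ifs <;> omega
      · have := count_lt_count_of_apply_lt σ hlt (by rwa [hσ', hσ'] at h)
        simp only [u]; split_ifs <;> omega
    · have : u a < u b := by simp only [u]; split_ifs <;> omega
      exact ⟨this.le, fun _ => this⟩
  refine descNum_le_of_tag σ' u (fun a b hab => ?_) (fun a => ?_)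
    fun a b hab h => (hu a b (Fin.lt_def.2 (by omega))).2 h
  · rcases hab.eq_or_lt with rfl | hab
    exacts [le_rfl, (hu a b hab).1]
  · have := count_isDescentAt_le_descNum σ (τ a)
    simp only [u]; split_ifs <;> omega

/-- Sorting the positions of `σ'` by tag and then by value undoes a duplication-loss step. -/
theorem exists_dlStep_of_tag {σ' : Equiv.Perm (Fin n)} (m B : ℕ) (r : Fin n → ℕ)
    (hrB : ∀ a, r a ≤ B)
    (hr : ∀ a b : Fin n, a < b → ((b : ℕ) < m ∨ m ≤ (a : ℕ)) →
      toLex (r a, σ' a) < toLex (r b, σ' b)) :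
    ∃ σ : Equiv.Perm (Fin n), descNum σ ≤ B ∧ DLStep σ σ' := by
  obtain ⟨τ, hτ⟩ := exists_perm_lt_iff (fun a => toLex (r a, σ' a))
    fun a b h => σ'.injective (congrArg Prod.snd (toLex.injective h))
  refine ⟨σ' * τ⁻¹, descNum_le_of_tag _ (fun a => r (τ⁻¹ a)) (fun a b hab => ?_)
    (fun a => hrB _) (fun a b hab hlt => ?_), m, τ,
    fun a b _ hb hab => (hτ a b).2 (hr a b hab (Or.inl hb)),
    fun a b ha _ hab => (hτ a b).2 (hr a b hab (Or.inr ha)), fun a => by simp⟩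
  · have : toLex (r (τ⁻¹ a), σ' (τ⁻¹ a)) ≤ toLex (r (τ⁻¹ b), σ' (τ⁻¹ b)) := by
      rw [← not_lt, ← hτ]
      simpa using hab.not_gt
    exact (Prod.Lex.toLex_le_toLex'.1 this).1
  · have := (hτ (τ⁻¹ a) (τ⁻¹ b)).1 (by simpa using (Fin.lt_def.2 (by omega) : a < b))
    rw [Prod.Lex.toLex_lt_toLex'] at this
    exact this.1.lt_of_ne fun he => (this.2 he).asymm hlt

theorem exists_dlStep_of_descNum_le {σ' : Equiv.Perm (Fin n)} {B : ℕ}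
    (hB : descNum σ' ≤ 2 * B + 1) :
    ∃ σ : Equiv.Perm (Fin n), descNum σ ≤ B ∧ DLStep σ σ' := by
  -- the first block consists of the first `B + 1` ascending runs of `σ'`
  have hm : ∃ m, n ≤ m ∨ B < Nat.count (IsDescentAt σ') m := ⟨n, Or.inl le_rfl⟩
  have hfirst : ∀ a : Fin n, (a : ℕ) < Nat.find hm ↔ Nat.count (IsDescentAt σ') a ≤ B := by
    refine fun a => ⟨fun ha => ?_, fun ha => ?_⟩
    · have := Nat.find_min hm ha
      push Not at this
      exact this.2
    · by_contra! hma
      rcases Nat.find_spec hm with h | h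
      · omega
      · exact (h.trans_le (Nat.count_monotone _ hma)).not_ge ha
  refine exists_dlStep_of_tag (Nat.find hm) B (fun a => if (a : ℕ) < Nat.find hm then
    Nat.count (IsDescentAt σ') a else Nat.count (IsDescentAt σ') a - (B + 1)) (fun a => ?_) ?_
  · have := count_isDescentAt_le_descNum σ' a
    have := hfirst a
    split_ifs <;> omega
  intro a b hab hblock
  have hle := Nat.count_monotone (IsDescentAt σ') (Fin.le_def.1 hab.le)
  have ha := hfirst a
  have hb := hfirst b
  rw [Prod.Lex.toLex_lt_toLex']
  refine ⟨by split_ifs <;> omega, fun he => apply_lt_apply_of_count_eq σ' hab ?_⟩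
  split_ifs at he <;> omega

end Step

section Obtainable

variable {n : ℕ}

theorem obtainableIn_one (p : ℕ) : ObtainableIn p (1 : Equiv.Perm (Fin n)) :=
  ⟨0, fun _ => 1, Nat.zero_le p, rfl, rfl, fun _ h => absurd h (Nat.not_lt_zero _)⟩

theorem ObtainableIn.dlStep {p : ℕ} {σ₀ σ : Equiv.Perm (Fin n)} (h : ObtainableIn p σ₀)
    (hs : DLStep σ₀ σ) : ObtainableIn (p + 1) σ := by
  obtain ⟨q, c, hqp, hc₀, hcq, hc⟩ := h
  refine ⟨q + 1, fun i => if i ≤ q then c i else σ, by omega, by simpa using hc₀, by simp,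
    fun i hi => ?_⟩
  rcases (Nat.lt_succ_iff.1 hi).lt_or_eq with hi | rfl
  · simpa [hi.le, Nat.succ_le_of_lt hi] using hc i hi
  · simpa [hcq] using hs

theorem descNum_lt_of_obtainableIn {p : ℕ} {σ : Equiv.Perm (Fin n)} (h : ObtainableIn p σ) :
    descNum σ < 2 ^ p := by
  obtain ⟨q, c, hqp, hc₀, rfl, hc⟩ := h
  have hlt : ∀ i ≤ q, descNum (c i) < 2 ^ i := by
    intro i
    induction i with
    | zero => simp [hc₀, descNum_one]
    | succ i ih =>
      intro hi
      have := ih (by omega)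
      have := descNum_le_of_dlStep (hc i hi)
      rw [pow_succ]
      omega
  exact (hlt q le_rfl).trans_le (Nat.pow_le_pow_right two_pos hqp)

theorem obtainableIn_of_descNum_lt {p : ℕ} {σ : Equiv.Perm (Fin n)} (h : descNum σ < 2 ^ p) :
    ObtainableIn p σ := by
  induction p generalizing σ with
  | zero =>
    rw [eq_one_of_descNum_eq_zero σ (by simpa using h)]
    exact obtainableIn_one 0
  | succ p ih =>
    have := Nat.one_le_two_pow (n := p)
    obtain ⟨σ₀, hσ₀, hs⟩ := exists_dlStep_of_descNum_le (σ' := σ) (B := 2 ^ p - 1)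
      (by rw [pow_succ] at h; omega)
    exact (ih (by omega)).dlStep hs

theorem obtainableIn_iff_descNum_lt {p : ℕ} {σ : Equiv.Perm (Fin n)} :
    ObtainableIn p σ ↔ descNum σ < 2 ^ p :=
  ⟨descNum_lt_of_obtainableIn, obtainableIn_of_descNum_lt⟩

end Obtainable

/-- For `d = 2 ^ p`: a permutation is obtainable in at most `p` steps in the whole genome
duplication - random loss model if and only if it avoids every minimal permutation with
`d` descents; moreover the set `B_d` of minimal permutations with `d` descents is finite. -/
theorem obtainable_iff_avoids_minimal_and_finite (p d : ℕ) (hd : d = 2 ^ p) :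
    (∀ (n : ℕ) (σ : Equiv.Perm (Fin n)),
      ObtainableIn p σ ↔
        ∀ (k : ℕ) (π : Equiv.Perm (Fin k)), MinimalWithDescents d π → ¬ IsPattern π σ) ∧
    {x : Σ n : ℕ, Equiv.Perm (Fin n) | MinimalWithDescents d x.2}.Finite := by
  subst hd
  refine ⟨fun n σ => ?_, finite_setOf_minimalWithDescents _⟩
  rw [obtainableIn_iff_descNum_lt, ← not_le, ← exists_minimalWithDescents_isPattern_iff]
  simp only [not_exists, not_and]
end

section
/- Let σ be a minimal permutation with d descents and let n be its size. Then d + 1 ≤ n ≤ 2d. -/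
/-!
Deleting an entry `σ_j` with `σ_{j-1} < σ_j < σ_{j+1}` (a missing neighbour imposing no
condition) and standardizing gives a proper pattern of `σ` with exactly the same descents.
Hence in a minimal permutation every position `j` is either a descent or follows one, so the
`n` positions are covered by the `d` descents and their successors, and `n ≤ 2d`. The lower
bound holds because the `d` descents lie among the `n - 1` positions of adjacent pairs.
-/

open Set

section Descents

variable {n : ℕ} (σ : Equiv.Perm (Fin n))

lemma isDescentAt_iff_of_val_eq {a b : Fin n} (hab : (b : ℕ) = a + 1) :
    IsDescentAt σ a ↔ σ b < σ a := by
  obtain ⟨a, ha⟩ := a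
  obtain ⟨b, hb⟩ := b
  subst hab
  exact ⟨fun ⟨_, h⟩ => h, fun h => ⟨hb, h⟩⟩

lemma lt_of_not_isDescentAt {a b : Fin n} (hab : (b : ℕ) = a + 1) (h : ¬IsDescentAt σ a) :
    σ a < σ b := by
  rw [isDescentAt_iff_of_val_eq σ hab, not_lt] at h
  exact h.lt_of_ne (σ.injective.ne (Fin.ne_of_val_ne (by omega)))

lemma setOf_isDescentAt_subset_Iio : {i | IsDescentAt σ i} ⊆ Iio (n - 1) := by
  rintro i ⟨hi, -⟩
  rw [mem_Iio]
  omega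

lemma finite_setOf_isDescentAt : {i | IsDescentAt σ i}.Finite :=
  (finite_Iio _).subset (setOf_isDescentAt_subset_Iio σ)

lemma descNum_le : descNum σ ≤ n - 1 :=
  (ncard_le_ncard (setOf_isDescentAt_subset_Iio σ)).trans (ncard_Iio_nat _).le

end Descents

def natSuccAbove (j i : ℕ) : ℕ := if i < j then i else i + 1

lemma natSuccAbove_injective (j : ℕ) : Function.Injective (natSuccAbove j) := by
  intro a b hab
  simp only [natSuccAbove] at hab
  split_ifs at hab <;> omega

lemma range_natSuccAbove (j : ℕ) : range (natSuccAbove j) = {j}ᶜ := by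
  ext i
  simp only [mem_range, mem_compl_singleton_iff, natSuccAbove]
  constructor
  · rintro ⟨k, rfl⟩
    split_ifs <;> omega
  · intro hij
    rcases lt_or_gt_of_ne hij with hlt | hgt
    · exact ⟨i, if_pos hlt⟩
    · exact ⟨i - 1, by rw [if_neg (by omega)]; omega⟩

lemma Fin.val_succAbove {m : ℕ} (j : Fin (m + 1)) (x : Fin m) :
    (j.succAbove x : ℕ) = natSuccAbove j x := by
  unfold Fin.succAbove natSuccAbove
  split_ifs with h h' h' <;> simp_all [Fin.lt_def]

namespace Equiv.Perm

variable {m : ℕ} (σ : Perm (Fin (m + 1))) (j : Fin (m + 1))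

def removeAt : Perm (Fin m) :=
  (finSuccAboveEquiv j).trans <|
    (σ.subtypeEquiv (p := (· ≠ j)) (q := (· ≠ σ j)) fun _ => σ.injective.ne_iff.symm).trans
      (finSuccAboveEquiv (σ j)).symm

lemma succAbove_removeAt (x : Fin m) : (σ j).succAbove (σ.removeAt j x) = σ (j.succAbove x) := by
  simp only [removeAt, trans_apply, finSuccAboveEquiv_apply, subtypeEquiv_apply]
  exact congrArg Subtype.val ((finSuccAboveEquiv (σ j)).apply_symm_apply _)

lemma removeAt_lt_removeAt_iff (x y : Fin m) :
    σ.removeAt j x < σ.removeAt j y ↔ σ (j.succAbove x) < σ (j.succAbove y) := by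
  rw [← Fin.succAbove_lt_succAbove_iff (p := σ j), succAbove_removeAt, succAbove_removeAt]

lemma isPattern_removeAt : IsPattern (σ.removeAt j) σ :=
  ⟨j.succAboveOrderEmb, fun x y => (σ.removeAt_lt_removeAt_iff j x y).mp⟩

variable {σ j}

lemma isDescentAt_removeAt_iff {i : ℕ} (hij : i + 1 ≠ j) :
    IsDescentAt (σ.removeAt j) i ↔ IsDescentAt σ (natSuccAbove j i) := by
  by_cases hi : i + 1 < m
  · have hval : (j.succAbove ⟨i + 1, hi⟩ : ℕ) = j.succAbove ⟨i, by omega⟩ + 1 := by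
      simp only [Fin.val_succAbove, natSuccAbove]
      split_ifs <;> omega
    rw [isDescentAt_iff_of_val_eq (σ.removeAt j) (a := ⟨i, by omega⟩) (b := ⟨i + 1, hi⟩) rfl,
      removeAt_lt_removeAt_iff, ← isDescentAt_iff_of_val_eq σ hval, Fin.val_succAbove]
  · refine iff_of_false (fun ⟨hi', _⟩ => hi hi') fun ⟨hi', _⟩ => ?_
    simp only [natSuccAbove] at hi'
    split_ifs at hi' <;> omega

-- For `j = 0` the truncated `j - 1` is `j` itself, matching the missing left neighbour.
lemma setOf_isDescentAt_removeAt (h : ¬IsDescentAt σ j) (h' : ¬IsDescentAt σ (j - 1)) :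
    {i | IsDescentAt (σ.removeAt j) i} = natSuccAbove j ⁻¹' {i | IsDescentAt σ i} := by
  ext i
  by_cases hij : i + 1 = j
  · have hsucc : natSuccAbove j i = j - 1 := by simp only [natSuccAbove]; split_ifs <;> omega
    simp only [mem_ofPred_eq, mem_preimage, hsucc, h', iff_false]
    rintro ⟨hi, hlt⟩
    have hprev : (j.succAbove ⟨i, by omega⟩ : ℕ) = j - 1 := by
      rw [Fin.val_succAbove, hsucc]
    have hnext : (j.succAbove ⟨i + 1, hi⟩ : ℕ) = j + 1 := by
      simp only [Fin.val_succAbove, natSuccAbove]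
      split_ifs <;> omega
    rw [removeAt_lt_removeAt_iff] at hlt
    exact hlt.not_gt <| (lt_of_not_isDescentAt σ (by omega) (by rwa [hprev])).trans
      (lt_of_not_isDescentAt σ hnext h)
  · exact isDescentAt_removeAt_iff hij

lemma descNum_removeAt (h : ¬IsDescentAt σ j) (h' : ¬IsDescentAt σ (j - 1)) :
    descNum (σ.removeAt j) = descNum σ := by
  rw [descNum, descNum, setOf_isDescentAt_removeAt h h']
  refine ncard_preimage_of_injective_subset_range (natSuccAbove_injective j) ?_
  rw [range_natSuccAbove]
  rintro _ hj rfl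
  exact h hj

end Equiv.Perm

lemma MinimalWithDescents.isDescentAt_or_isDescentAt_pred {d n : ℕ} {σ : Equiv.Perm (Fin n)}
    (h : MinimalWithDescents d σ) {j : ℕ} (hj : j < n) :
    IsDescentAt σ j ∨ IsDescentAt σ (j - 1) := by
  obtain ⟨m, rfl⟩ : ∃ m, n = m + 1 := ⟨n - 1, by omega⟩
  by_contra! hj'
  have := h.2 m (σ.removeAt ⟨j, hj⟩) m.lt_succ_self (σ.isPattern_removeAt _)
  rw [σ.descNum_removeAt hj'.1 hj'.2, h.1] at this
  exact this.false

lemma le_two_mul_ncard_of_mem_or_pred_mem {s : Set ℕ} (hs : s.Finite) {n : ℕ}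
    (h : ∀ j < n, j ∈ s ∨ j - 1 ∈ s) : n ≤ 2 * s.ncard := by
  have hcover : Iio n ⊆ s ∪ (· + 1) '' s := by
    intro j hj
    rcases h j hj with hj | hj
    · exact Or.inl hj
    · rcases j with _ | j
      · exact Or.inl hj
      · exact Or.inr ⟨j, hj, rfl⟩
  calc n = (Iio n).ncard := (ncard_Iio_nat n).symm
    _ ≤ (s ∪ (· + 1) '' s).ncard := ncard_le_ncard hcover (hs.union (hs.image _))
    _ ≤ s.ncard + ((· + 1) '' s).ncard := ncard_union_le _ _
    _ = 2 * s.ncard := by rw [ncard_image_of_injective s (add_left_injective 1), two_mul]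

/-- A minimal permutation with `d` descents (`d ≥ 1`) has size `n` with `d + 1 ≤ n ≤ 2d`. -/
theorem size_of_minimal_between {n d : ℕ} (hd : 1 ≤ d) (σ : Equiv.Perm (Fin n))
    (h : MinimalWithDescents d σ) : d + 1 ≤ n ∧ n ≤ 2 * d := by
  have hle : d ≤ n - 1 := h.1 ▸ descNum_le σ
  refine ⟨by omega, ?_⟩
  rw [← h.1]
  exact le_two_mul_ncard_of_mem_or_pred_mem (finite_setOf_isDescentAt σ)
    fun _ => h.isDescentAt_or_isDescentAt_pred
end
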